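/- arXiv:2202.12387 — 4 statements merged into one kernel-verified Lean document; each statement's English description precedes it below -/
import Mathlib

section
/- Let F : ℝ^d → ℝ be differentiable with gradient ∇F Lipschitz continuous with constant L_F > 0 (i.e., F is L_F-smooth). Let η > 0 satisfy η·L_F ≤ 1/2, let w, v ∈ ℝ^d, and set w' = w − η·v. Then F(w') ≤ F(w) + (η/2)·‖v − ∇F(w)‖² − (η/2)·‖∇F(w)‖² − (η/4)·‖v‖², where ‖·‖ is the Euclidean norm. -/
open MeasureTheory

open scoped RealInnerProductSpace in
/-- Quadratic upper bound (descent lemma) for a function with Lipschitz gradient. -/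
lemma descent_quadratic {d : ℕ}
    (F : EuclideanSpace ℝ (Fin d) → ℝ)
    (F' : EuclideanSpace ℝ (Fin d) → EuclideanSpace ℝ (Fin d))
    (hF : ∀ x, HasGradientAt F (F' x) x)
    (L_F : ℝ)
    (hlip : ∀ x y, ‖F' x - F' y‖ ≤ L_F * ‖x - y‖)
    (w u : EuclideanSpace ℝ (Fin d)) :
    F (w + u) ≤ F w + ⟪F' w, u⟫ + L_F / 2 * ‖u‖ ^ 2 := by
  set B : ℝ := ⟪F' w, u⟫
  have hline : ∀ t : ℝ, HasDerivAt (fun t : ℝ => F (w + t • u))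
      ⟪F' (w + t • u), u⟫ t := by
    intro t
    have h1 : HasDerivAt (fun t : ℝ => w + t • u) u t := by
      simpa using ((hasDerivAt_id t).smul_const u).const_add w
    have h2 := ((hF (w + t • u)).hasFDerivAt).comp_hasDerivAt t h1
    simp at h2; exact h2
  set g : ℝ → ℝ := fun t => F (w + t • u) - t * B - L_F / 2 * ‖u‖ ^ 2 * t ^ 2 with hg
  have hgderiv : ∀ t : ℝ, HasDerivAt g
      (⟪F' (w + t • u), u⟫ - B - L_F * ‖u‖ ^ 2 * t) t := by
    intro t
    have := ((hline t).sub ((hasDerivAt_id t).mul_const B)).sub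
      (((hasDerivAt_id t).pow 2).const_mul (L_F / 2 * ‖u‖ ^ 2))
    convert this using 1
    · rfl
    · rfl
    · rfl
    simp [id]
    ring
  have hmono : AntitoneOn g (Set.Icc (0:ℝ) 1) := by
    apply antitoneOn_of_deriv_nonpos (convex_Icc 0 1)
    · exact fun t _ => ((hgderiv t).differentiableAt.continuousAt).continuousWithinAt
    · intro t ht
      exact ((hgderiv t).differentiableAt).differentiableWithinAt
    · intro t ht
      rw [interior_Icc] at ht
      rw [(hgderiv t).deriv]
      have hinner : ⟪F' (w + t • u), u⟫ - B ≤ L_F * ‖u‖ ^ 2 * t := by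
        have : ⟪F' (w + t • u), u⟫ - B = ⟪F' (w + t • u) - F' w, u⟫ := by
          rw [inner_sub_left]
        rw [this]
        calc ⟪F' (w + t • u) - F' w, u⟫ ≤ ‖F' (w + t • u) - F' w‖ * ‖u‖ :=
              real_inner_le_norm _ _
          _ ≤ L_F * ‖(w + t • u) - w‖ * ‖u‖ := by
              have := hlip (w + t • u) w
              nlinarith [norm_nonneg u]
          _ = L_F * ‖u‖ ^ 2 * t := by
              have : (w + t • u) - w = t • u := by abel
              rw [this, norm_smul, Real.norm_eq_abs, abs_of_pos ht.1]
              ring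
      linarith
  have h01 : g 1 ≤ g 0 := hmono (by norm_num) (by norm_num) (by norm_num)
  simp only [hg, one_smul, zero_smul, add_zero, one_mul, zero_mul, one_pow] at h01
  nlinarith [h01]

/-- **Descent lemma for one SGD-style step.**
Let `F : ℝ^d → ℝ` be differentiable with gradient `F'` Lipschitz with constant `L_F > 0`.
If `η > 0` satisfies `η * L_F ≤ 1/2`, `w, v ∈ ℝ^d` and `w' = w - η • v`, then
`F w' ≤ F w + (η/2) * ‖v - F' w‖² - (η/2) * ‖F' w‖² - (η/4) * ‖v‖²`. -/
theorem simclr_descent_lemma {d : ℕ}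
    (F : EuclideanSpace ℝ (Fin d) → ℝ)
    (F' : EuclideanSpace ℝ (Fin d) → EuclideanSpace ℝ (Fin d))
    (hF : ∀ x, HasGradientAt F (F' x) x)
    (L_F : ℝ) (hL_F : 0 < L_F)
    (hlip : ∀ x y, ‖F' x - F' y‖ ≤ L_F * ‖x - y‖)
    (η : ℝ) (hη : 0 < η) (hstep : η * L_F ≤ 1 / 2)
    (w v : EuclideanSpace ℝ (Fin d)) :
    F (w - η • v) ≤
      F w + (η / 2) * ‖v - F' w‖ ^ 2 - (η / 2) * ‖F' w‖ ^ 2 - (η / 4) * ‖v‖ ^ 2 := by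
  have key := descent_quadratic F F' hF L_F hlip w (-(η • v))
  have heq : w + -(η • v) = w - η • v := by abel
  rw [heq] at key
  have hB : inner ℝ (F' w) (-(η • v)) = -(η * inner ℝ (F' w) v) := by
    rw [inner_neg_right, real_inner_smul_right]
  have hnorm : ‖-(η • v)‖ ^ 2 = η ^ 2 * ‖v‖ ^ 2 := by
    rw [norm_neg, norm_smul, Real.norm_eq_abs, abs_of_pos hη, mul_pow]
  rw [hB, hnorm] at key
  have hexpand : ‖v - F' w‖ ^ 2 = ‖v‖ ^ 2 - 2 * inner ℝ v (F' w) + ‖F' w‖ ^ 2 := by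
    exact norm_sub_sq_real v (F' w)
  have hsymm : (inner ℝ v (F' w) : ℝ) = inner ℝ (F' w) v := real_inner_comm _ _
  nlinarith [sq_nonneg ‖v‖, norm_nonneg v]
end

section
/- Let (Ω, 𝓕, P) be a probability space, let H be a real inner product space (e.g., ℝ^d), and let A₁, A₂, A₃, A₄, A₅ : Ω → H be random vectors with finite second moments such that E[⟨A₁, A₅⟩] = 0 and E[⟨A₂, A₅⟩] = 0. Then for every β with 0 < β ≤ 1: E[‖A₁ + A₂ + A₃ + A₄ + A₅‖²] ≤ (1+β)·E[‖A₁‖²] + (3 + 3/β)·E[‖A₂‖²] + (4 + 3/β)·E[‖A₃‖²] + (4 + 3/β)·E[‖A₄‖²] + 3·E[‖A₅‖²]. -/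
/-!
Expand `‖A₁ + ⋯ + A₅‖²` into squared norms and cross terms, and bound every cross term by
Young's inequality `2⟪x, y⟫ ≤ c‖x‖² + c⁻¹‖y‖²`, with `c = β / 3` for the three terms
`⟪A₁, A₂⟫, ⟪A₁, A₃⟫, ⟪A₁, A₄⟫` and `c = 1` otherwise. The cross terms `⟪A₁, A₅⟫` and
`⟪A₂, A₅⟫` are kept; they vanish after taking expectations.
-/

open MeasureTheory
open scoped InnerProductSpace

section InnerProductSpace

variable {H : Type*} [NormedAddCommGroup H] [InnerProductSpace ℝ H]

theorem two_mul_inner_le_mul_norm_sq_add_inv_mul_norm_sq (x y : H) {c : ℝ} (hc : 0 < c) :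
    2 * ⟪x, y⟫_ℝ ≤ c * ‖x‖ ^ 2 + c⁻¹ * ‖y‖ ^ 2 := by
  have hsq : 0 ≤ c⁻¹ * (c * ‖x‖ - ‖y‖) ^ 2 := by positivity
  have hexp : c⁻¹ * (c * ‖x‖ - ‖y‖) ^ 2 = c * ‖x‖ ^ 2 - 2 * ‖x‖ * ‖y‖ + c⁻¹ * ‖y‖ ^ 2 := by
    field_simp
    ring
  linarith [real_inner_le_norm x y]

theorem norm_add_five_sq_le (a b c d e : H) {β : ℝ} (hβ : 0 < β) :
    ‖a + b + c + d + e‖ ^ 2 ≤ (1 + β) * ‖a‖ ^ 2 + (3 + 3 / β) * ‖b‖ ^ 2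
      + (4 + 3 / β) * ‖c‖ ^ 2 + (4 + 3 / β) * ‖d‖ ^ 2 + 3 * ‖e‖ ^ 2
      + 2 * ⟪a, e⟫_ℝ + 2 * ⟪b, e⟫_ℝ := by
  have young_a (x : H) : 2 * ⟪a, x⟫_ℝ ≤ β / 3 * ‖a‖ ^ 2 + 3 / β * ‖x‖ ^ 2 := by
    simpa only [inv_div] using
      two_mul_inner_le_mul_norm_sq_add_inv_mul_norm_sq a x (by positivity : 0 < β / 3)
  have young (x y : H) : 2 * ⟪x, y⟫_ℝ ≤ ‖x‖ ^ 2 + ‖y‖ ^ 2 := by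
    simpa only [one_mul, inv_one] using
      two_mul_inner_le_mul_norm_sq_add_inv_mul_norm_sq x y one_pos
  simp only [norm_add_sq_real, inner_add_left]
  linarith [young_a b, young_a c, young_a d, young b c, young b d, young c d, young c e,
    young d e]

end InnerProductSpace

theorem MeasureTheory.MemLp.integrable_inner {Ω : Type*} [MeasurableSpace Ω] {P : Measure Ω}
    {H : Type*} [NormedAddCommGroup H] [InnerProductSpace ℝ H] {f g : Ω → H}
    (hf : MemLp f 2 P) (hg : MemLp g 2 P) : Integrable (fun ω => ⟪f ω, g ω⟫_ℝ) P := by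
  refine (integrable_congr ?_).mp (L2.integrable_inner (hf.toLp f) (hg.toLp g))
  filter_upwards [hf.coeFn_toLp, hg.coeFn_toLp] with ω hfω hgω
  rw [hfω, hgω]

theorem five_term_young_bound_general
    {Ω : Type*} [MeasurableSpace Ω] (P : Measure Ω)
    {H : Type*} [NormedAddCommGroup H] [InnerProductSpace ℝ H]
    (A₁ A₂ A₃ A₄ A₅ : Ω → H)
    (hA₁ : MemLp A₁ 2 P) (hA₂ : MemLp A₂ 2 P) (hA₃ : MemLp A₃ 2 P)
    (hA₄ : MemLp A₄ 2 P) (hA₅ : MemLp A₅ 2 P)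
    (h15 : ∫ ω, ⟪A₁ ω, A₅ ω⟫_ℝ ∂P = 0)
    (h25 : ∫ ω, ⟪A₂ ω, A₅ ω⟫_ℝ ∂P = 0)
    (β : ℝ) (hβ0 : 0 < β) :
    ∫ ω, ‖A₁ ω + A₂ ω + A₃ ω + A₄ ω + A₅ ω‖ ^ 2 ∂P ≤
      (1 + β) * ∫ ω, ‖A₁ ω‖ ^ 2 ∂P + (3 + 3 / β) * ∫ ω, ‖A₂ ω‖ ^ 2 ∂P
        + (4 + 3 / β) * ∫ ω, ‖A₃ ω‖ ^ 2 ∂P + (4 + 3 / β) * ∫ ω, ‖A₄ ω‖ ^ 2 ∂P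
        + 3 * ∫ ω, ‖A₅ ω‖ ^ 2 ∂P := by
  have hA₁_sq := hA₁.norm.integrable_sq
  have hA₂_sq := hA₂.norm.integrable_sq
  have hA₃_sq := hA₃.norm.integrable_sq
  have hA₄_sq := hA₄.norm.integrable_sq
  have hA₅_sq := hA₅.norm.integrable_sq
  have hA₁₅ := hA₁.integrable_inner hA₅
  have hA₂₅ := hA₂.integrable_inner hA₅
  have hsum := ((((hA₁.add hA₂).add hA₃).add hA₄).add hA₅).norm.integrable_sq
  refine (integral_mono hsum (by fun_prop)
    fun ω => norm_add_five_sq_le (A₁ ω) (A₂ ω) (A₃ ω) (A₄ ω) (A₅ ω) hβ0).trans_eq ?_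
  simp (disch := fun_prop) only [integral_add, integral_const_mul, h15, h25]
  ring

/-- **Young-type bound on the second moment of a sum of five random vectors.**
If `A₁,…,A₅ : Ω → H` have finite second moments and `E⟪A₁,A₅⟫ = E⟪A₂,A₅⟫ = 0`, then for
`0 < β ≤ 1`,
`E‖A₁+A₂+A₃+A₄+A₅‖² ≤ (1+β)E‖A₁‖² + (3+3/β)E‖A₂‖² + (4+3/β)E‖A₃‖² + (4+3/β)E‖A₄‖² + 3E‖A₅‖²`. -/
theorem five_term_young_bound
    {Ω : Type*} [MeasurableSpace Ω] (P : Measure Ω) [IsProbabilityMeasure P]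
    {H : Type*} [NormedAddCommGroup H] [InnerProductSpace ℝ H] [CompleteSpace H]
    (A₁ A₂ A₃ A₄ A₅ : Ω → H)
    (hA₁ : MemLp A₁ 2 P) (hA₂ : MemLp A₂ 2 P) (hA₃ : MemLp A₃ 2 P)
    (hA₄ : MemLp A₄ 2 P) (hA₅ : MemLp A₅ 2 P)
    (h15 : ∫ ω, ⟪A₁ ω, A₅ ω⟫_ℝ ∂P = 0)
    (h25 : ∫ ω, ⟪A₂ ω, A₅ ω⟫_ℝ ∂P = 0)
    (β : ℝ) (hβ0 : 0 < β) (hβ1 : β ≤ 1) :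
    ∫ ω, ‖A₁ ω + A₂ ω + A₃ ω + A₄ ω + A₅ ω‖ ^ 2 ∂P ≤
      (1 + β) * ∫ ω, ‖A₁ ω‖ ^ 2 ∂P + (3 + 3 / β) * ∫ ω, ‖A₂ ω‖ ^ 2 ∂P
        + (4 + 3 / β) * ∫ ω, ‖A₃ ω‖ ^ 2 ∂P + (4 + 3 / β) * ∫ ω, ‖A₄ ω‖ ^ 2 ∂P
        + 3 * ∫ ω, ‖A₅ ω‖ ^ 2 ∂P :=
  five_term_young_bound_general P A₁ A₂ A₃ A₄ A₅ hA₁ hA₂ hA₃ hA₄ hA₅ h15 h25 β hβ0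
end

section
/- Under the SimCLR stochastic setup, the second moment of the gradient estimator satisfies, at every iteration t, E_t[‖v_t‖²] ≤ 2·‖∇F(w_t)‖² + C/B + 16·C_g²·C_f², where E_t denotes conditional expectation given the history up to iteration t and C is a constant depending only on σ, C_g, C_f, and L_f. -/
open MeasureTheory ProbabilityTheory InnerProductSpace

set_option maxHeartbeats 1600000 in
/-- **Second moment of the SimCLR gradient estimator.**
Under the SimCLR stochastic setup, the gradient estimator `v` satisfies, at every iterate `w`,
`E‖v‖² ≤ 2‖∇F(w)‖² + C/B + 16·C_g²·C_f²`, where `C` depends only on `σ, C_g, C_f, L_f`. -/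
theorem simclr_estimator_second_moment
    (σ C_f C_g L_f : ℝ) (hσ : 0 < σ) (hC_f : 0 < C_f) (hC_g : 0 < C_g) (hL_f : 0 < L_f) :
    ∃ C : ℝ, 0 < C ∧
    ∀ (d n B : ℕ), 0 < d → 0 < n → 0 < B →
    ∀ (L_F : ℝ), 0 < L_F →
    ∀ (f f' : ℝ → ℝ),
      (∀ x, HasDerivAt f (f' x) x) →
      (∀ x, |f' x| ≤ C_f) →
      (∀ x y, |f' x - f' y| ≤ L_f * |x - y|) →
    ∀ (ΩA : Type) (_ : MeasurableSpace ΩA) (μA : Measure ΩA), IsProbabilityMeasure μA →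
    ∀ (g : Fin n → EuclideanSpace ℝ (Fin d) → ΩA → ℝ)
      (gGrad : Fin n → EuclideanSpace ℝ (Fin d) → ΩA → EuclideanSpace ℝ (Fin d)),
      (∀ i w a, HasGradientAt (fun w' => g i w' a) (gGrad i w a) w) →
      (∀ i w a, ‖gGrad i w a‖ ≤ C_g) →
      (∀ i w, Integrable (fun a => f (g i w a)) μA) →
    ∀ (F1 : EuclideanSpace ℝ (Fin d) → ℝ)
      (F1Grad : EuclideanSpace ℝ (Fin d) → EuclideanSpace ℝ (Fin d)),
      (∀ w, HasGradientAt F1 (F1Grad w) w) →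
    ∀ (F : EuclideanSpace ℝ (Fin d) → ℝ)
      (FGrad : EuclideanSpace ℝ (Fin d) → EuclideanSpace ℝ (Fin d)),
      (∀ w, F w = F1 w + (1 / (n : ℝ)) * ∑ i, ∫ a, f (g i w a) ∂μA) →
      (∀ w, HasGradientAt F (FGrad w) w) →
      (∀ x y, ‖FGrad x - FGrad y‖ ≤ L_F * ‖x - y‖) →
    ∀ (S0 : Type) (_ : MeasurableSpace S0) (ν0 : Measure S0), IsProbabilityMeasure ν0 →
    ∀ (idx : S0 → Fin n), Measurable idx →
    ∀ (aug : S0 → ΩA), Measurable aug →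
      (∀ i, ν0 {s | idx s = i} = (1 : ENNReal) / n) →
      Measure.map aug ν0 = μA →
      IndepFun idx aug ν0 →
    ∀ (gHat : EuclideanSpace ℝ (Fin d) → S0 → ℝ)
      (gGradHat : EuclideanSpace ℝ (Fin d) → S0 → EuclideanSpace ℝ (Fin d)),
      (∀ w, Measurable (gHat w)) → (∀ w, Measurable (gGradHat w)) →
      (∀ w, ν0[fun s => gHat w s |
          MeasurableSpace.comap (fun s => (idx s, aug s)) inferInstance] =ᵐ[ν0]
        fun s => g (idx s) w (aug s)) →
      (∀ w, ∀ᵐ s ∂ν0,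
        (ν0[fun s' => (gHat w s' - g (idx s') w (aug s')) ^ 2 |
            MeasurableSpace.comap (fun s => (idx s, aug s)) inferInstance]) s ≤ σ ^ 2 / B) →
      (∀ w, ν0[fun s => gGradHat w s |
          MeasurableSpace.comap (fun s => (idx s, aug s)) inferInstance] =ᵐ[ν0]
        fun s => gGrad (idx s) w (aug s)) →
      (∀ w, ∀ᵐ s ∂ν0,
        (ν0[fun s' => ‖gGradHat w s' - gGrad (idx s') w (aug s')‖ ^ 2 |
            MeasurableSpace.comap (fun s => (idx s, aug s)) inferInstance]) s ≤ σ ^ 2 / B) →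
      (∀ w s, ‖gGradHat w s‖ ≤ C_g) →
    ∀ (F1Hat : EuclideanSpace ℝ (Fin d) → (Fin B → S0) → EuclideanSpace ℝ (Fin d)),
      (∀ w, Measurable (F1Hat w)) →
      (∀ w, ∫ s, F1Hat w s ∂(Measure.pi fun _ : Fin B => ν0) = F1Grad w) →
      (∀ w, ∫ s, ‖F1Hat w s - F1Grad w‖ ^ 2 ∂(Measure.pi fun _ : Fin B => ν0) ≤ σ ^ 2 / B) →
    ∀ (v : EuclideanSpace ℝ (Fin d) → (Fin B → S0) → EuclideanSpace ℝ (Fin d)),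
      (∀ w s, v w s = F1Hat w s
        + (B : ℝ)⁻¹ • ∑ k : Fin B, f' (gHat w (s k)) • gGradHat w (s k)) →
    ∀ w : EuclideanSpace ℝ (Fin d),
      Integrable (fun s => ‖v w s‖ ^ 2) (Measure.pi fun _ : Fin B => ν0) →
      ∫ s, ‖v w s‖ ^ 2 ∂(Measure.pi fun _ : Fin B => ν0) ≤
        2 * ‖FGrad w‖ ^ 2 + C / B + 16 * C_g ^ 2 * C_f ^ 2 := by
  refine ⟨4 * σ ^ 2, by positivity, ?_⟩
  intro d n B hd hn hB L_F hL_F f f' hf hf'bd _hf'lip ΩA _ μA hμA g gGrad hg hgbd hIntf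
    F1 F1Grad hF1 F FGrad hFdef hF _hFlip S0 _ ν0 hν0 idx _hidx aug _haug _hunif _hmap _hindep
    gHat gGradHat _hm1 _hm2 _hce1 _hv1 _hce2 _hv2 hgGradHatbd
    F1Hat hF1Hatm _hF1Hatmean hF1Hatvar v hvdef w hv_int
  set ν : Measure (Fin B → S0) := Measure.pi fun _ : Fin B => ν0 with hν
  haveI : IsProbabilityMeasure ν := by infer_instance
  set CC : ℝ := C_f * C_g with hCCdef
  have hCCpos : 0 < CC := mul_pos hC_f hC_g
  -- Each sample loss w ↦ f (g i w a) is CC-Lipschitz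
  have hlip_fg : ∀ (i : Fin n) (a : ΩA) (x y : EuclideanSpace ℝ (Fin d)),
      |f (g i x a) - f (g i y a)| ≤ CC * ‖x - y‖ := by
    intro i a x y
    have hder : ∀ z ∈ (Set.univ : Set (EuclideanSpace ℝ (Fin d))),
        HasFDerivWithinAt (fun w' => f (g i w' a))
          ((f' (g i z a)) • toDual ℝ (EuclideanSpace ℝ (Fin d)) (gGrad i z a)) Set.univ z := by
      intro z _
      exact ((hf (g i z a)).comp_hasFDerivAt z (hg i z a).hasFDerivAt).hasFDerivWithinAt
    have hbd : ∀ z ∈ (Set.univ : Set (EuclideanSpace ℝ (Fin d))),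
        ‖(f' (g i z a)) • toDual ℝ (EuclideanSpace ℝ (Fin d)) (gGrad i z a)‖ ≤ CC := by
      intro z _
      rw [norm_smul]
      calc ‖f' (g i z a)‖ * ‖toDual ℝ (EuclideanSpace ℝ (Fin d)) (gGrad i z a)‖
          ≤ C_f * C_g := by
            rw [(toDual ℝ (EuclideanSpace ℝ (Fin d))).norm_map]
            exact mul_le_mul (hf'bd _) (hgbd i z a) (norm_nonneg _) hC_f.le
        _ = CC := rfl
    have := convex_univ.norm_image_sub_le_of_norm_hasFDerivWithin_le hder hbd
      (Set.mem_univ y) (Set.mem_univ x)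
    simpa [Real.norm_eq_abs] using this
  -- G = F - F1 is CC-Lipschitz
  set G : EuclideanSpace ℝ (Fin d) → ℝ := fun w' => F w' - F1 w' with hGdef
  have hGlip : ∀ x y, |G x - G y| ≤ CC * ‖x - y‖ := by
    intro x y
    have hx := hFdef x; have hy := hFdef y
    have hGx : G x = (1 / (n : ℝ)) * ∑ i, ∫ a, f (g i x a) ∂μA := by
      simp only [hGdef]; rw [hx]; ring
    have hGy : G y = (1 / (n : ℝ)) * ∑ i, ∫ a, f (g i y a) ∂μA := by
      simp only [hGdef]; rw [hy]; ring
    have hterm : ∀ i : Fin n,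
        |(∫ a, f (g i x a) ∂μA) - ∫ a, f (g i y a) ∂μA| ≤ CC * ‖x - y‖ := by
      intro i
      rw [← integral_sub (hIntf i x) (hIntf i y)]
      calc |∫ a, (f (g i x a) - f (g i y a)) ∂μA|
          ≤ ∫ a, |f (g i x a) - f (g i y a)| ∂μA := by
            simpa [Real.norm_eq_abs] using
              norm_integral_le_integral_norm (μ := μA) (fun a => f (g i x a) - f (g i y a))
        _ ≤ ∫ _a, CC * ‖x - y‖ ∂μA := by
            refine integral_mono ((hIntf i x).sub (hIntf i y)).abs (integrable_const _) ?_
            intro a; exact hlip_fg i a x y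
        _ = CC * ‖x - y‖ := by simp
    rw [hGx, hGy, ← mul_sub, ← Finset.sum_sub_distrib, abs_mul]
    have hn' : (0 : ℝ) < n := Nat.cast_pos.mpr hn
    calc |1 / (n : ℝ)| * |∑ i : Fin n, ((∫ a, f (g i x a) ∂μA) - ∫ a, f (g i y a) ∂μA)|
        ≤ (1 / (n : ℝ)) * ∑ i : Fin n, |(∫ a, f (g i x a) ∂μA) - ∫ a, f (g i y a) ∂μA| := by
          rw [abs_of_pos (by positivity)]
          gcongr
          exact Finset.abs_sum_le_sum_abs _ _
      _ ≤ (1 / (n : ℝ)) * ∑ _i : Fin n, (CC * ‖x - y‖) := by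
          refine mul_le_mul_of_nonneg_left (Finset.sum_le_sum fun i _ => hterm i) (by positivity)
      _ = CC * ‖x - y‖ := by
          rw [Finset.sum_const, Finset.card_fin, nsmul_eq_mul]
          field_simp
  -- gradient of G at w is FGrad w - F1Grad w, with norm ≤ CC
  have hGgrad : HasGradientAt G (FGrad w - F1Grad w) w := by
    have h := (hF w).hasFDerivAt.sub (hF1 w).hasFDerivAt
    rw [← map_sub] at h
    exact h
  have hhbd : ‖FGrad w - F1Grad w‖ ≤ CC := by
    have h1 : ‖toDual ℝ (EuclideanSpace ℝ (Fin d)) (FGrad w - F1Grad w)‖ ≤ CC := by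
      refine hGgrad.hasFDerivAt.le_of_lip' hCCpos.le ?_
      filter_upwards with x
      simpa [Real.norm_eq_abs] using hGlip x w
    rwa [(toDual ℝ (EuclideanSpace ℝ (Fin d))).norm_map] at h1
  set avgF : (Fin B → S0) → EuclideanSpace ℝ (Fin d) :=
    fun s => (B : ℝ)⁻¹ • ∑ k : Fin B, f' (gHat w (s k)) • gGradHat w (s k) with havgF
  have havgFbd : ∀ s, ‖avgF s‖ ≤ CC := by
    intro s
    rw [havgF]
    simp only [norm_smul]
    calc ‖(B : ℝ)⁻¹‖ * ‖∑ k : Fin B, f' (gHat w (s k)) • gGradHat w (s k)‖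
        ≤ (B : ℝ)⁻¹ * ∑ k : Fin B, ‖f' (gHat w (s k)) • gGradHat w (s k)‖ := by
          rw [Real.norm_eq_abs, abs_of_nonneg (by positivity)]
          exact mul_le_mul_of_nonneg_left (norm_sum_le _ _) (by positivity)
      _ ≤ (B : ℝ)⁻¹ * ∑ _k : Fin B, (C_f * C_g) := by
          refine mul_le_mul_of_nonneg_left (Finset.sum_le_sum fun k _ => ?_) (by positivity)
          rw [norm_smul, Real.norm_eq_abs]
          exact mul_le_mul (hf'bd _) (hgGradHatbd w (s k)) (norm_nonneg _) hC_f.le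
      _ = CC := by
          rw [Finset.sum_const, Finset.card_fin, nsmul_eq_mul]
          have hB' : (0 : ℝ) < B := Nat.cast_pos.mpr hB
          field_simp [hCCdef]
          exact hCCdef.symm
  -- pointwise bound on ‖v‖²
  have hpt : ∀ s : Fin B → S0, ‖v w s‖ ^ 2 ≤
      2 * ‖FGrad w‖ ^ 2 + 4 * ‖F1Hat w s - F1Grad w‖ ^ 2 + 16 * C_g ^ 2 * C_f ^ 2 := by
    intro s
    set avg : EuclideanSpace ℝ (Fin d) := avgF s with havg
    have havgbd : ‖avg‖ ≤ CC := havgFbd s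
    have hvsplit : v w s = FGrad w + ((F1Hat w s - F1Grad w) + (avg - (FGrad w - F1Grad w))) := by
      rw [hvdef w s, havg, havgF]; abel
    have h2 : ‖avg - (FGrad w - F1Grad w)‖ ≤ 2 * CC := by
      calc ‖avg - (FGrad w - F1Grad w)‖ ≤ ‖avg‖ + ‖FGrad w - F1Grad w‖ := norm_sub_le _ _
        _ ≤ CC + CC := add_le_add havgbd hhbd
        _ = 2 * CC := by ring
    have htri : ‖v w s‖ ≤ ‖FGrad w‖ + (‖F1Hat w s - F1Grad w‖ + 2 * CC) := by
      rw [hvsplit]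
      calc ‖FGrad w + ((F1Hat w s - F1Grad w) + (avg - (FGrad w - F1Grad w)))‖
          ≤ ‖FGrad w‖ + ‖(F1Hat w s - F1Grad w) + (avg - (FGrad w - F1Grad w))‖ :=
            norm_add_le _ _
        _ ≤ ‖FGrad w‖ + (‖F1Hat w s - F1Grad w‖ + 2 * CC) := by
            gcongr
            exact (norm_add_le _ _).trans (by gcongr)
    have h0v : (0:ℝ) ≤ ‖v w s‖ := norm_nonneg _
    have h0a : (0:ℝ) ≤ ‖F1Hat w s - F1Grad w‖ := norm_nonneg _
    have h0F : (0:ℝ) ≤ ‖FGrad w‖ := norm_nonneg _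
    have hsq : ‖v w s‖ ^ 2 ≤ (‖FGrad w‖ + (‖F1Hat w s - F1Grad w‖ + 2 * CC)) ^ 2 := by
      exact pow_le_pow_left₀ h0v htri 2
    have hCC2 : CC ^ 2 = C_f ^ 2 * C_g ^ 2 := by rw [hCCdef]; ring
    nlinarith [sq_nonneg (‖FGrad w‖ - (‖F1Hat w s - F1Grad w‖ + 2 * CC)),
      sq_nonneg (‖F1Hat w s - F1Grad w‖ - 2 * CC), hCCpos.le, h0a]
  -- integrability of the error term
  have hmeas : AEStronglyMeasurable (fun s => ‖F1Hat w s - F1Grad w‖ ^ 2) ν := by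
    exact (((hF1Hatm w).sub measurable_const).norm.pow_const 2).aestronglyMeasurable
  have herr_bd : ∀ s : Fin B → S0,
      ‖F1Hat w s - F1Grad w‖ ^ 2 ≤ 2 * ‖v w s‖ ^ 2 + 2 * (CC + ‖F1Grad w‖) ^ 2 := by
    intro s
    have h1 : ‖F1Hat w s - F1Grad w‖ ≤ ‖v w s‖ + (CC + ‖F1Grad w‖) := by
      have heq : F1Hat w s - F1Grad w = (v w s - avgF s) - F1Grad w := by
        rw [hvdef w s, havgF]; abel
      rw [heq]
      calc ‖(v w s - avgF s) - F1Grad w‖ ≤ ‖v w s - avgF s‖ + ‖F1Grad w‖ := norm_sub_le _ _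
        _ ≤ (‖v w s‖ + CC) + ‖F1Grad w‖ := by
            have h2 := (norm_sub_le (v w s) (avgF s)).trans
              (add_le_add (le_refl ‖v w s‖) (havgFbd s))
            linarith
        _ = ‖v w s‖ + (CC + ‖F1Grad w‖) := by ring
    nlinarith [norm_nonneg (v w s), norm_nonneg (F1Hat w s - F1Grad w),
      sq_nonneg (‖v w s‖ - (CC + ‖F1Grad w‖)), pow_le_pow_left₀ (norm_nonneg _) h1 2]
  have herr_int : Integrable (fun s => ‖F1Hat w s - F1Grad w‖ ^ 2) ν := by
    refine Integrable.mono ((hv_int.const_mul 2).add (integrable_const (2 * (CC + ‖F1Grad w‖) ^ 2)))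
      hmeas ?_
    filter_upwards with s
    rw [Real.norm_eq_abs, abs_of_nonneg (by positivity), Real.norm_eq_abs]
    exact (herr_bd s).trans (le_abs_self _)
  -- final integration
  calc ∫ s, ‖v w s‖ ^ 2 ∂ν
      ≤ ∫ s, (2 * ‖FGrad w‖ ^ 2 + 4 * ‖F1Hat w s - F1Grad w‖ ^ 2 + 16 * C_g ^ 2 * C_f ^ 2) ∂ν := by
        refine integral_mono hv_int ?_ hpt
        have : Integrable (fun s => 2 * ‖FGrad w‖ ^ 2 + (4 * ‖F1Hat w s - F1Grad w‖ ^ 2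
              + 16 * C_g ^ 2 * C_f ^ 2)) ν :=
          (integrable_const _).add ((herr_int.const_mul 4).add (integrable_const _))
        convert this using 2 with s
        ring
    _ = 2 * ‖FGrad w‖ ^ 2 + 4 * (∫ s, ‖F1Hat w s - F1Grad w‖ ^ 2 ∂ν)
        + 16 * C_g ^ 2 * C_f ^ 2 := by
        have hfun : (fun s => 2 * ‖FGrad w‖ ^ 2 + 4 * ‖F1Hat w s - F1Grad w‖ ^ 2
            + 16 * C_g ^ 2 * C_f ^ 2)
            = fun s => (2 * ‖FGrad w‖ ^ 2 + 16 * C_g ^ 2 * C_f ^ 2)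
              + 4 * ‖F1Hat w s - F1Grad w‖ ^ 2 := by
          funext s; ring
        rw [hfun, integral_add (integrable_const _) (herr_int.const_mul 4),
          integral_const, integral_const_mul]
        simp
        ring
    _ ≤ 2 * ‖FGrad w‖ ^ 2 + 4 * (σ ^ 2 / B) + 16 * C_g ^ 2 * C_f ^ 2 := by
        gcongr
        exact hF1Hatvar w
    _ = 2 * ‖FGrad w‖ ^ 2 + 4 * σ ^ 2 / B + 16 * C_g ^ 2 * C_f ^ 2 := by ring
end

section
/- (Lyapunov combination lemma for three coupled recursions.) Let n, B ∈ ℕ₊ and constants L_F, L_f, C_g, σ, C, ε ≥ 0, and parameters η > 0, β ∈ (0,1], γ ∈ (0,1] with γ ≤ n/B and η ≤ min{β/(6·L_F), γ·B/(50·L_f·n·C_g²)}. Let (F_t), (D_t), (X_t), (G_t), (V_t), (U_t), t = 1,…,T+1, be nonnegative real sequences satisfying for all t ∈ {1,…,T}: (i) F_{t+1} ≤ F_t + (η/2)·D_t − (η/2)·G_t − (η/4)·V_t; (ii) D_{t+1} ≤ (1−β)·D_t + (3·L_F²·η²/β)·V_t + 14·β·L_f²·C_g²·X_{t+1} + β²·C/B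 + (14·β·L_f²·C_g²/n)·U_t + 7·β·C_g²·L_f²·ε²; (iii) X_{t+1} ≤ (1 − γ·B/(4n))·X_t + (5·n·η²·C_g²/(γ·B))·V_t + 2·γ²·σ²/n − (1/(4n))·U_t. Suppose moreover 1/4 − 3·L_F²·η²/β² − 280·L_f²·n²·C_g⁴·η²/(γ²·B²) ≥ 0. Then, with Φ₁ = F₁ + (η/β)·D₁ + (56·L_f²·C_g²·n·η/(γ·B))·(1 − γ·B/(4n))·X₁, it holds that (1/T)·Σ_{t=1}^T G_t ≤ 2·Φ₁/(η·T) + 2·β·C/B + 224·γ·L_f²·C_g²·σ²/B + 14·C_g²·L_f²·ε². -/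
private lemma tele_aux (Φ : ℕ → ℝ) (K : ℝ) (g : ℕ → ℝ) (T : ℕ)
    (h : ∀ t ∈ Finset.Icc 1 T, g t ≤ Φ t - Φ (t + 1) + K) :
    ∑ t ∈ Finset.Icc 1 T, g t ≤ Φ 1 - Φ (T + 1) + T * K := by
  have h3 : ∑ t ∈ Finset.Icc 1 T, (Φ t - Φ (t + 1)) = Φ 1 - Φ (T + 1) := by
    clear h
    induction T with
    | zero => simp
    | succ k ih =>
      rw [Finset.sum_Icc_succ_top (by omega : 1 ≤ k + 1), ih]
      ring
  calc ∑ t ∈ Finset.Icc 1 T, g t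
      ≤ ∑ t ∈ Finset.Icc 1 T, (Φ t - Φ (t + 1) + K) := Finset.sum_le_sum h
    _ = (∑ t ∈ Finset.Icc 1 T, (Φ t - Φ (t + 1))) + T * K := by
        rw [Finset.sum_add_distrib, Finset.sum_const, Nat.card_Icc]
        simp [Nat.add_sub_cancel, mul_comm]
    _ = Φ 1 - Φ (T + 1) + T * K := by rw [h3]


set_option maxHeartbeats 1000000 in
/-- **Lyapunov combination lemma for three coupled recursions** (deterministic abstraction of
the SogCLR convergence proof).  Here `Fs t` is the objective gap, `D t` the squared
gradient-estimator error, `X t` the tracking error, `G t` the squared gradient norm, `V t`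
the squared update-direction norm, and `U t` the squared change of the moving-average vector. -/
theorem lyapunov_combination
    (n B : ℕ) (hn : 0 < n) (hB : 0 < B)
    (L_F L_f C_g σ C ε : ℝ)
    (hL_F : 0 ≤ L_F) (hL_f : 0 ≤ L_f) (hC_g : 0 ≤ C_g) (hσ : 0 ≤ σ) (hC : 0 ≤ C) (hε : 0 ≤ ε)
    (η β γ : ℝ) (hη : 0 < η) (hβ0 : 0 < β) (hβ1 : β ≤ 1) (hγ0 : 0 < γ) (hγ1 : γ ≤ 1)
    (hγB : γ ≤ (n : ℝ) / B)
    (hηle : η ≤ min (β / (6 * L_F)) (γ * B / (50 * L_f * n * C_g ^ 2)))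
    (T : ℕ) (hT : 0 < T)
    (Fs D X G V U : ℕ → ℝ)
    (hFs : ∀ t, 0 ≤ Fs t) (hD : ∀ t, 0 ≤ D t) (hX : ∀ t, 0 ≤ X t)
    (hG : ∀ t, 0 ≤ G t) (hV : ∀ t, 0 ≤ V t) (hU : ∀ t, 0 ≤ U t)
    (h1 : ∀ t ∈ Finset.Icc 1 T,
      Fs (t + 1) ≤ Fs t + (η / 2) * D t - (η / 2) * G t - (η / 4) * V t)
    (h2 : ∀ t ∈ Finset.Icc 1 T,
      D (t + 1) ≤ (1 - β) * D t + (3 * L_F ^ 2 * η ^ 2 / β) * V t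
        + 14 * β * L_f ^ 2 * C_g ^ 2 * X (t + 1) + β ^ 2 * C / B
        + (14 * β * L_f ^ 2 * C_g ^ 2 / n) * U t + 7 * β * C_g ^ 2 * L_f ^ 2 * ε ^ 2)
    (h3 : ∀ t ∈ Finset.Icc 1 T,
      X (t + 1) ≤ (1 - γ * B / (4 * n)) * X t + (5 * n * η ^ 2 * C_g ^ 2 / (γ * B)) * V t
        + 2 * γ ^ 2 * σ ^ 2 / n - (1 / (4 * n)) * U t)
    (hcoef : 0 ≤ 1 / 4 - 3 * L_F ^ 2 * η ^ 2 / β ^ 2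
        - 280 * L_f ^ 2 * n ^ 2 * C_g ^ 4 * η ^ 2 / (γ ^ 2 * B ^ 2)) :
    (T : ℝ)⁻¹ * ∑ t ∈ Finset.Icc 1 T, G t ≤
      2 * (Fs 1 + (η / β) * D 1
          + (56 * L_f ^ 2 * C_g ^ 2 * n * η / (γ * B)) * (1 - γ * B / (4 * n)) * X 1) / (η * T)
        + 2 * β * C / B + 224 * γ * L_f ^ 2 * C_g ^ 2 * σ ^ 2 / B
        + 14 * C_g ^ 2 * L_f ^ 2 * ε ^ 2 := by
  have hNpos : (0:ℝ) < (n:ℝ) := by exact_mod_cast hn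
  have hBpos : (0:ℝ) < (B:ℝ) := by exact_mod_cast hB
  have hN' : ((n:ℝ)) ≠ 0 := ne_of_gt hNpos
  have hB' : ((B:ℝ)) ≠ 0 := ne_of_gt hBpos
  have hβ' : β ≠ 0 := ne_of_gt hβ0
  have hγ' : γ ≠ 0 := ne_of_gt hγ0
  have hη' : η ≠ 0 := ne_of_gt hη
  have hgB : γ * (B:ℝ) ≤ (n:ℝ) := (le_div_iff₀ hBpos).mp hγB
  have hcnn : (0:ℝ) ≤ 56 * L_f ^ 2 * C_g ^ 2 * (n:ℝ) * η / (γ * (B:ℝ)) := by positivity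
  have hρ : (0:ℝ) ≤ 1 - γ * (B:ℝ) / (4 * (n:ℝ)) := by
    rw [sub_nonneg, div_le_one (by positivity)]
    nlinarith
  -- the one-step Lyapunov decrease
  have step : ∀ t ∈ Finset.Icc 1 T,
      (fun t => η / 2 * G t) t ≤
        (fun s => Fs s + (η / β) * D s
            + 56 * L_f ^ 2 * C_g ^ 2 * (n:ℝ) * η / (γ * (B:ℝ))
              * (1 - γ * (B:ℝ) / (4 * (n:ℝ))) * X s) t
          - (fun s => Fs s + (η / β) * D s
            + 56 * L_f ^ 2 * C_g ^ 2 * (n:ℝ) * η / (γ * (B:ℝ))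
              * (1 - γ * (B:ℝ) / (4 * (n:ℝ))) * X s) (t + 1)
          + η * (β * C / (B:ℝ) + 112 * γ * L_f ^ 2 * C_g ^ 2 * σ ^ 2 / (B:ℝ)
              + 7 * C_g ^ 2 * L_f ^ 2 * ε ^ 2) := by
    intro t ht
    simp only
    have H1 := h1 t ht
    have H2 : (η / β) * D (t + 1) ≤ (η / β - η) * D t + 3 * L_F ^ 2 * η ^ 3 / β ^ 2 * V t
        + 14 * η * L_f ^ 2 * C_g ^ 2 * X (t + 1) + η * β * C / (B:ℝ)
        + 14 * η * L_f ^ 2 * C_g ^ 2 / (n:ℝ) * U t + 7 * η * C_g ^ 2 * L_f ^ 2 * ε ^ 2 := by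
      refine le_trans (mul_le_mul_of_nonneg_left (h2 t ht) (by positivity : (0:ℝ) ≤ η / β))
        (le_of_eq ?_)
      field_simp
    have H3 : 56 * L_f ^ 2 * C_g ^ 2 * (n:ℝ) * η / (γ * (B:ℝ)) * X (t + 1) ≤
        56 * L_f ^ 2 * C_g ^ 2 * (n:ℝ) * η / (γ * (B:ℝ)) * (1 - γ * (B:ℝ) / (4 * (n:ℝ))) * X t
        + 280 * L_f ^ 2 * C_g ^ 4 * (n:ℝ) ^ 2 * η ^ 3 / (γ ^ 2 * (B:ℝ) ^ 2) * V t
        + 112 * γ * L_f ^ 2 * C_g ^ 2 * η * σ ^ 2 / (B:ℝ)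
        - 14 * η * L_f ^ 2 * C_g ^ 2 / (γ * (B:ℝ)) * U t := by
      refine le_trans (mul_le_mul_of_nonneg_left (h3 t ht) hcnn) (le_of_eq ?_)
      field_simp
      ring
    have idX : 56 * L_f ^ 2 * C_g ^ 2 * (n:ℝ) * η / (γ * (B:ℝ))
          * (1 - γ * (B:ℝ) / (4 * (n:ℝ))) * X (t + 1)
        + 14 * η * L_f ^ 2 * C_g ^ 2 * X (t + 1)
        = 56 * L_f ^ 2 * C_g ^ 2 * (n:ℝ) * η / (γ * (B:ℝ)) * X (t + 1) := by
      field_simp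
      ring
    have hVd : 0 ≤ η * V t * (1 / 4 - 3 * L_F ^ 2 * η ^ 2 / β ^ 2
        - 280 * L_f ^ 2 * (n:ℝ) ^ 2 * C_g ^ 4 * η ^ 2 / (γ ^ 2 * (B:ℝ) ^ 2)) :=
      mul_nonneg (mul_nonneg hη.le (hV t)) hcoef
    have hUd : 14 * η * L_f ^ 2 * C_g ^ 2 / (n:ℝ) * U t ≤
        14 * η * L_f ^ 2 * C_g ^ 2 / (γ * (B:ℝ)) * U t := by
      gcongr
      exact hU t
    have hDnn : 0 ≤ η * D t := mul_nonneg hη.le (hD t)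
    ring_nf at H1 H2 H3 idX hVd hUd hDnn ⊢
    linarith
  have HS := tele_aux _ _ _ T step
  simp only [← Finset.mul_sum] at HS
  have hΦT : 0 ≤ Fs (T + 1) + (η / β) * D (T + 1)
      + 56 * L_f ^ 2 * C_g ^ 2 * (n:ℝ) * η / (γ * (B:ℝ))
        * (1 - γ * (B:ℝ) / (4 * (n:ℝ))) * X (T + 1) := by
    have := hFs (T + 1)
    have := mul_nonneg (by positivity : (0:ℝ) ≤ η / β) (hD (T + 1))
    have := mul_nonneg (mul_nonneg hcnn hρ) (hX (T + 1))
    linarith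
  have hTpos : (0:ℝ) < (T:ℝ) := by exact_mod_cast hT
  have hT' : ((T:ℝ)) ≠ 0 := ne_of_gt hTpos
  have key2 : (η / 2) * ∑ t ∈ Finset.Icc 1 T, G t ≤
      (Fs 1 + (η / β) * D 1
        + 56 * L_f ^ 2 * C_g ^ 2 * (n:ℝ) * η / (γ * (B:ℝ))
          * (1 - γ * (B:ℝ) / (4 * (n:ℝ))) * X 1)
      + (T:ℝ) * (η * (β * C / (B:ℝ) + 112 * γ * L_f ^ 2 * C_g ^ 2 * σ ^ 2 / (B:ℝ)
          + 7 * C_g ^ 2 * L_f ^ 2 * ε ^ 2)) := by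
    linarith [HS, hΦT]
  generalize hPg : Fs 1 + (η / β) * D 1
      + 56 * L_f ^ 2 * C_g ^ 2 * (n:ℝ) * η / (γ * (B:ℝ))
        * (1 - γ * (B:ℝ) / (4 * (n:ℝ))) * X 1 = P at key2 ⊢
  generalize hSg : ∑ t ∈ Finset.Icc 1 T, G t = S at key2 ⊢
  rw [inv_mul_le_iff₀ hTpos]
  calc S = (2 / η) * ((η / 2) * S) := by field_simp
    _ ≤ (2 / η) * (P + (T:ℝ) * (η * (β * C / (B:ℝ)
        + 112 * γ * L_f ^ 2 * C_g ^ 2 * σ ^ 2 / (B:ℝ) + 7 * C_g ^ 2 * L_f ^ 2 * ε ^ 2))) :=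
      mul_le_mul_of_nonneg_left key2 (by positivity)
    _ = (T:ℝ) * (2 * P / (η * (T:ℝ)) + 2 * β * C / (B:ℝ)
        + 224 * γ * L_f ^ 2 * C_g ^ 2 * σ ^ 2 / (B:ℝ) + 14 * C_g ^ 2 * L_f ^ 2 * ε ^ 2) := by
      field_simp
      ring
end
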